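/- Let G be a connected simple graph on n vertices with distance Laplacian eigenvalues ∂L_1 ≥ ⋯ ≥ ∂L_{n−1} ≥ ∂L_n = 0. Then ∂L_{n−1} ≥ n, and ∂L_{n−1} = n if and only if the complement of G is disconnected. Furthermore, the multiplicity of n as a distance Laplacian eigenvalue of G equals one less than the number of connected components of the complement of G. -/

import Mathlib

/-!
Writing `d(i,j) = 1 + (d(i,j) - 1)` splits the distance Laplacian as `nI - J + L`, where `L` is
the Laplacian of the weights `d(i,j) - 1`. For connected `G` these weights are nonnegative off
the diagonal and positive exactly on the edges of `Gᶜ`, so `L` is positive semidefinite with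
kernel the vectors constant on the components of `Gᶜ`. An eigenvector of a nonzero eigenvalue `μ` sums to zero, hence
`μ ‖x‖² = n ‖x‖² + xᵀ L x ≥ n ‖x‖²`; and the eigenspace of `n` is `ker L(Gᶜ) ∩ 𝟙^⊥`, of dimension
one less than the number of components of `Gᶜ`. The kernel of `D^L` is spanned by `𝟙`, so `0` is a
simple eigenvalue and the second smallest one is `n` exactly when `Gᶜ` is disconnected.
-/

open Matrix

/-- The distance Laplacian matrix of a graph: diagonal entries are the transmissions
`Tr(v) = ∑ u, d(v,u)`, off-diagonal entries are `-d(u,v)`. -/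
noncomputable def distLaplacian {V : Type*} [Fintype V] [DecidableEq V]
    (G : SimpleGraph V) : Matrix V V ℝ :=
  Matrix.of fun i j => if i = j then ∑ k : V, (G.dist i k : ℝ) else -(G.dist i j : ℝ)

/-- The multiplicity of `μ` as an eigenvalue of `M`, i.e. the dimension of the
corresponding eigenspace. -/
noncomputable def eigMult {V : Type*} [Fintype V] (M : Matrix V V ℝ) (μ : ℝ) : ℕ :=
  Module.finrank ℝ (Module.End.eigenspace M.mulVecLin μ)

/-- The largest eigenvalue of a matrix. -/
noncomputable def lambdaMax {V : Type*} [Fintype V] (M : Matrix V V ℝ) : ℝ :=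
  sSup {μ : ℝ | Module.End.HasEigenvalue M.mulVecLin μ}

/-- The transmission of a vertex. -/
noncomputable def transmission {V : Type*} [Fintype V] (G : SimpleGraph V) (v : V) : ℕ :=
  ∑ u : V, G.dist v u

/-- The distance Laplacian eigenvalues of `G`, with multiplicity, sorted in
nondecreasing order (so `∂ᴸ_n = head` and `∂ᴸ₁ = last`). -/
noncomputable def distLapEigsAsc {V : Type*} [Fintype V] [DecidableEq V]
    (G : SimpleGraph V) : List ℝ :=
  (distLaplacian G).charpoly.roots.sort (· ≤ ·)

namespace Matrix.IsHermitian

variable {V : Type*} [Fintype V] [DecidableEq V] {A : Matrix V V ℝ}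

theorem isSemisimple_mulVecLin (hA : A.IsHermitian) : Module.End.IsSemisimple A.mulVecLin :=
  (LinearEquiv.isSemisimple_iff _ _ (WithLp.linearEquiv 2 ℝ (V → ℝ)) (by ext; rfl)).mp <|
    Module.End.isFinitelySemisimple_iff_isSemisimple.mp
      (isSymmetric_toEuclideanLin_iff.mpr hA).isFinitelySemisimple

theorem count_roots_charpoly (hA : A.IsHermitian) (μ : ℝ) :
    A.charpoly.roots.count μ = eigMult A μ := by
  rw [Polynomial.count_roots, ← charpoly_mulVecLin, ← LinearMap.finrank_maxGenEigenspace_eq,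
    hA.isSemisimple_mulVecLin.isFinitelySemisimple.maxGenEigenspace_eq_eigenspace, eigMult]

theorem card_roots_charpoly (hA : A.IsHermitian) :
    Multiset.card A.charpoly.roots = Fintype.card V := by
  simp [hA.roots_charpoly_eq_eigenvalues]

end Matrix.IsHermitian

theorem Submodule.finrank_inf_ker_add_one {K M : Type*} [Field K] [AddCommGroup M] [Module K M]
    {p : Submodule K M} [FiniteDimensional K p] {f : Module.Dual K M} {v : M} (hv : v ∈ p)
    (hfv : f v ≠ 0) : Module.finrank K ↥(p ⊓ LinearMap.ker f) + 1 = Module.finrank K p := by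
  have hf : f ∘ₗ p.subtype ≠ 0 := fun h ↦ hfv (LinearMap.congr_fun h ⟨v, hv⟩)
  rw [← Submodule.map_comap_subtype, Submodule.finrank_map_subtype_eq, ← LinearMap.ker_comp,
    Module.Dual.finrank_ker_add_one_of_ne_zero hf]

namespace SimpleGraph

variable {V : Type*}

theorem connected_iff_natCard_connectedComponent_eq_one (G : SimpleGraph V) :
    G.Connected ↔ Nat.card G.ConnectedComponent = 1 := by
  rw [Nat.card_eq_one_iff_unique, connected_iff]
  refine and_congr ⟨Preconnected.subsingleton_connectedComponent,
    fun _ u v ↦ ConnectedComponent.eq.mp (Subsingleton.elim _ _)⟩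
    ⟨fun ⟨v⟩ ↦ ⟨G.connectedComponentMk v⟩, fun ⟨c⟩ ↦ ?_⟩
  obtain ⟨v, -⟩ := c.exists_rep
  exact ⟨v⟩

theorem finrank_ker_lapMatrix [Fintype V] [DecidableEq V] (G : SimpleGraph V)
    [DecidableRel G.Adj] :
    Module.finrank ℝ (LinearMap.ker (G.lapMatrix ℝ).mulVecLin) = Nat.card G.ConnectedComponent := by
  rw [Nat.card_eq_fintype_card, card_connectedComponent_eq_finrank_ker_toLin'_lapMatrix,
    Matrix.toLin'_apply']

theorem Connected.one_lt_dist_iff_compl_adj {G : SimpleGraph V} (hG : G.Connected) {u v : V} :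
    1 < G.dist u v ↔ Gᶜ.Adj u v := by
  refine ⟨fun h ↦ ?_, fun h ↦ hG.one_lt_dist_of_ne_of_not_adj h.ne h.2⟩
  refine (compl_adj G u v).mpr ⟨fun huv ↦ ?_, fun hadj ↦ ?_⟩
  · simp [huv] at h
  · simp [dist_eq_one_iff_adj.mpr hadj] at h

theorem Connected.dist_sub_one_nonneg {G : SimpleGraph V} (hG : G.Connected) {u v : V}
    (huv : u ≠ v) : 0 ≤ (G.dist u v : ℝ) - 1 := by
  have := hG.pos_dist_of_ne huv
  rw [sub_nonneg]
  exact_mod_cast this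

end SimpleGraph

namespace Multiset

variable {s : Multiset ℝ} {a : ℝ}

theorem sort_eq_zero_cons_cons (ha : 0 < a) (hcard : 2 ≤ card s) (h0 : s.count 0 = 1)
    (hs : ∀ y ∈ s, y = 0 ∨ a ≤ y) :
    ∃ b t, s.sort (· ≤ ·) = 0 :: b :: t ∧ a ≤ b ∧ ∀ y ∈ t, b ≤ y := by
  have hmem : ∀ y, y ∈ s.sort (· ≤ ·) ↔ y ∈ s := fun y ↦ mem_sort _
  have hcount : (s.sort (· ≤ ·)).count 0 = 1 := by rwa [← coe_count, sort_eq]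
  have hlen : 2 ≤ (s.sort (· ≤ ·)).length := by rwa [length_sort]
  have hsorted := pairwise_sort s (· ≤ ·)
  generalize s.sort (· ≤ ·) = l at hmem hcount hlen hsorted ⊢
  obtain _ | ⟨c, _ | ⟨b, t⟩⟩ := l
  · simp at hlen
  · simp at hlen
  obtain ⟨hc_le, hb_le⟩ : (∀ y ∈ b :: t, c ≤ y) ∧ ∀ y ∈ t, b ≤ y := by
    simp only [List.pairwise_cons] at hsorted
    exact ⟨hsorted.1, hsorted.2.1⟩
  have hc : c = 0 := by
    have h0mem : (0 : ℝ) ∈ c :: b :: t := List.count_pos_iff.mp (by omega)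
    rcases hs c ((hmem c).mp List.mem_cons_self) with hc | hc
    · exact hc
    · rcases List.mem_cons.mp h0mem with h | h
      · exact h.symm
      · linarith [hc_le 0 h]
  subst hc
  refine ⟨b, t, rfl, ?_, hb_le⟩
  rcases hs b ((hmem b).mp (List.mem_cons_of_mem _ List.mem_cons_self)) with hb | hb
  · subst hb
    simp at hcount
  · exact hb

theorem le_getD_sort_one (ha : 0 < a) (hcard : 2 ≤ card s) (h0 : s.count 0 = 1)
    (hs : ∀ y ∈ s, y = 0 ∨ a ≤ y) : a ≤ (s.sort (· ≤ ·)).getD 1 0 := by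
  obtain ⟨b, t, hl, hab, -⟩ := sort_eq_zero_cons_cons ha hcard h0 hs
  rwa [hl]

theorem getD_sort_one_eq_iff (ha : 0 < a) (hcard : 2 ≤ card s) (h0 : s.count 0 = 1)
    (hs : ∀ y ∈ s, y = 0 ∨ a ≤ y) : (s.sort (· ≤ ·)).getD 1 0 = a ↔ a ∈ s := by
  obtain ⟨b, t, hl, hab, hbt⟩ := sort_eq_zero_cons_cons ha hcard h0 hs
  rw [← mem_sort (· ≤ ·), hl, List.getD_cons_succ, List.getD_cons_zero]
  refine ⟨fun h ↦ h ▸ List.mem_cons_of_mem _ List.mem_cons_self, fun h ↦ ?_⟩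
  rcases List.mem_cons.mp h with h | h
  · exact absurd h ha.ne'
  rcases List.mem_cons.mp h with h | h
  · exact h.symm
  · exact le_antisymm (hbt a h) hab

end Multiset

section WeightedLaplacian

variable {V : Type*}

theorem mul_sub_sq_nonneg_of_ne_imp_nonneg {w : V → V → ℝ} (hw₀ : ∀ i j, i ≠ j → 0 ≤ w i j)
    (x : V → ℝ) (i k : V) : 0 ≤ w i k * (x i - x k) ^ 2 := by
  rcases eq_or_ne i k with rfl | hik
  · simp
  · exact mul_nonneg (hw₀ i k hik) (sq_nonneg _)

variable [Fintype V] [DecidableEq V]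

def weightedLaplacian (w : V → V → ℝ) : Matrix V V ℝ :=
  diagonal (fun i ↦ ∑ k, w i k) - of w

theorem weightedLaplacian_mulVec_apply (w : V → V → ℝ) (x : V → ℝ) (i : V) :
    (weightedLaplacian w *ᵥ x) i = ∑ k, w i k * (x i - x k) := by
  rw [weightedLaplacian, sub_mulVec, Pi.sub_apply, mulVec_diagonal]
  simp [mulVec, dotProduct, mul_sub, Finset.sum_mul]

theorem weightedLaplacian_add (w₁ w₂ : V → V → ℝ) :
    weightedLaplacian (w₁ + w₂) = weightedLaplacian w₁ + weightedLaplacian w₂ := by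
  simp only [weightedLaplacian, Pi.add_apply, Finset.sum_add_distrib, ← diagonal_add,
    ← of_add_of]
  abel

theorem weightedLaplacian_one_mulVec (x : V → ℝ) :
    weightedLaplacian 1 *ᵥ x = (Fintype.card V : ℝ) • x - (∑ i, x i) • 1 := by
  ext i
  simp [weightedLaplacian_mulVec_apply, Finset.sum_sub_distrib]

variable {w : V → V → ℝ}

theorem sum_weightedLaplacian_mulVec (hw : ∀ i j, w i j = w j i) (x : V → ℝ) :
    ∑ i, (weightedLaplacian w *ᵥ x) i = 0 := by
  simp only [weightedLaplacian_mulVec_apply, mul_sub, Finset.sum_sub_distrib]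
  rw [sub_eq_zero, Finset.sum_comm]
  simp_rw [hw]

theorem dotProduct_weightedLaplacian_mulVec (hw : ∀ i j, w i j = w j i) (x : V → ℝ) :
    x ⬝ᵥ (weightedLaplacian w *ᵥ x) = (∑ i, ∑ k, w i k * (x i - x k) ^ 2) / 2 := by
  have hswap : ∑ i, ∑ k, w i k * (x i - x k) * x i = ∑ i, ∑ k, w i k * (x k - x i) * x k := by
    rw [Finset.sum_comm]
    simp_rw [hw]
  have hsq : ∑ i, ∑ k, w i k * (x i - x k) ^ 2 =
      ∑ i, ∑ k, w i k * (x i - x k) * x i + ∑ i, ∑ k, w i k * (x k - x i) * x k := by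
    rw [← Finset.sum_add_distrib]
    simp_rw [← Finset.sum_add_distrib]
    congr! 2
    ring
  simp only [dotProduct, weightedLaplacian_mulVec_apply, Finset.mul_sum]
  rw [hsq, ← hswap]
  simp_rw [mul_comm (x _)]
  ring

theorem dotProduct_weightedLaplacian_mulVec_nonneg (hw : ∀ i j, w i j = w j i)
    (hw₀ : ∀ i j, i ≠ j → 0 ≤ w i j) (x : V → ℝ) : 0 ≤ x ⬝ᵥ (weightedLaplacian w *ᵥ x) := by
  rw [dotProduct_weightedLaplacian_mulVec hw]
  exact div_nonneg (Finset.sum_nonneg fun i _ ↦ Finset.sum_nonneg fun k _ ↦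
    mul_sub_sq_nonneg_of_ne_imp_nonneg hw₀ x i k) zero_le_two

theorem weightedLaplacian_mulVec_eq_zero_iff (hw : ∀ i j, w i j = w j i)
    (hw₀ : ∀ i j, i ≠ j → 0 ≤ w i j) {x : V → ℝ} :
    weightedLaplacian w *ᵥ x = 0 ↔ ∀ i j, 0 < w i j → x i = x j := by
  refine ⟨fun h i j hij ↦ ?_, fun h ↦ funext fun i ↦ ?_⟩
  · have hsum : ∑ i, ∑ k, w i k * (x i - x k) ^ 2 = 0 := by
      have := dotProduct_weightedLaplacian_mulVec hw x
      rw [h, dotProduct_zero] at this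
      linarith
    have hterm : w i j * (x i - x j) ^ 2 = 0 := by
      rw [Finset.sum_eq_zero_iff_of_nonneg fun i _ ↦
        Finset.sum_nonneg fun k _ ↦ mul_sub_sq_nonneg_of_ne_imp_nonneg hw₀ x i k] at hsum
      exact (Finset.sum_eq_zero_iff_of_nonneg fun k _ ↦
        mul_sub_sq_nonneg_of_ne_imp_nonneg hw₀ x i k).mp (hsum i (Finset.mem_univ _)) j
        (Finset.mem_univ _)
    have := (mul_eq_zero.mp hterm).resolve_left hij.ne'
    exact sub_eq_zero.mp (pow_eq_zero_iff two_ne_zero |>.mp this)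
  · rw [weightedLaplacian_mulVec_apply, Pi.zero_apply]
    refine Finset.sum_eq_zero fun k _ ↦ ?_
    rcases eq_or_ne i k with rfl | hik
    · simp
    rcases (hw₀ i k hik).lt_or_eq with hpos | hzero
    · simp [h i k hpos]
    · simp [← hzero]

theorem weightedLaplacian_isHermitian (hw : ∀ i j, w i j = w j i) :
    (weightedLaplacian w).IsHermitian := by
  ext i j
  rcases eq_or_ne i j with rfl | hij
  · simp
  · simp [weightedLaplacian, hij, hij.symm, hw]

end WeightedLaplacian

section DistLaplacian

variable {V : Type*} [Fintype V] [DecidableEq V] {G : SimpleGraph V}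

theorem distLaplacian_eq_weightedLaplacian (G : SimpleGraph V) :
    distLaplacian G = weightedLaplacian fun i j ↦ (G.dist i j : ℝ) := by
  ext i j
  rcases eq_or_ne i j with rfl | hij
  · simp [distLaplacian, weightedLaplacian]
  · simp [distLaplacian, weightedLaplacian, hij]

theorem distLaplacian_eq_add (G : SimpleGraph V) :
    distLaplacian G = weightedLaplacian 1 + weightedLaplacian fun i j ↦ (G.dist i j : ℝ) - 1 := by
  rw [distLaplacian_eq_weightedLaplacian, ← weightedLaplacian_add]
  congr with i j
  simp

theorem distLaplacian_isHermitian (G : SimpleGraph V) : (distLaplacian G).IsHermitian := by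
  rw [distLaplacian_eq_weightedLaplacian]
  exact weightedLaplacian_isHermitian fun i j ↦ by rw [G.dist_comm]

theorem sum_distLaplacian_mulVec (G : SimpleGraph V) (x : V → ℝ) :
    ∑ i, (distLaplacian G *ᵥ x) i = 0 := by
  rw [distLaplacian_eq_weightedLaplacian]
  exact sum_weightedLaplacian_mulVec (fun i j ↦ by rw [G.dist_comm]) x

theorem sum_eq_zero_of_distLaplacian_mulVec_eq_smul {x : V → ℝ} {μ : ℝ} (hμ : μ ≠ 0)
    (h : distLaplacian G *ᵥ x = μ • x) : ∑ i, x i = 0 := by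
  have := sum_distLaplacian_mulVec G x
  simp only [h, Pi.smul_apply, smul_eq_mul, ← Finset.mul_sum] at this
  exact (mul_eq_zero.mp this).resolve_left hμ

theorem distLaplacian_mulVec_of_sum_eq_zero (G : SimpleGraph V) {x : V → ℝ}
    (hx : ∑ i, x i = 0) : distLaplacian G *ᵥ x =
      (Fintype.card V : ℝ) • x + weightedLaplacian (fun i j ↦ (G.dist i j : ℝ) - 1) *ᵥ x := by
  rw [distLaplacian_eq_add, add_mulVec, weightedLaplacian_one_mulVec, hx, zero_smul, sub_zero]

theorem eq_zero_or_card_le_of_distLaplacian_mulVec_eq_smul (hG : G.Connected) {x : V → ℝ}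
    (hx : x ≠ 0) {μ : ℝ} (h : distLaplacian G *ᵥ x = μ • x) :
    μ = 0 ∨ (Fintype.card V : ℝ) ≤ μ := by
  refine or_iff_not_imp_left.mpr fun hμ ↦ ?_
  have hpos : 0 < x ⬝ᵥ x := by simpa using dotProduct_self_star_pos_iff.mpr hx
  have hexcess : 0 ≤ x ⬝ᵥ (weightedLaplacian (fun i j ↦ (G.dist i j : ℝ) - 1) *ᵥ x) :=
    dotProduct_weightedLaplacian_mulVec_nonneg (fun i j ↦ by rw [G.dist_comm])
      (fun _ _ ↦ hG.dist_sub_one_nonneg) x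
  have hrayleigh : μ * (x ⬝ᵥ x) = Fintype.card V * (x ⬝ᵥ x) +
      x ⬝ᵥ (weightedLaplacian (fun i j ↦ (G.dist i j : ℝ) - 1) *ᵥ x) := by
    rw [← smul_eq_mul, ← dotProduct_smul, ← h, distLaplacian_mulVec_of_sum_eq_zero G
      (sum_eq_zero_of_distLaplacian_mulVec_eq_smul hμ h), dotProduct_add, dotProduct_smul,
      smul_eq_mul]
  exact le_of_mul_le_mul_right (by linarith) hpos

theorem distLaplacian_mulVec_eq_zero_iff (hG : G.Connected) {x : V → ℝ} :
    distLaplacian G *ᵥ x = 0 ↔ (⊤ : SimpleGraph V).lapMatrix ℝ *ᵥ x = 0 := by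
  rw [distLaplacian_eq_weightedLaplacian, weightedLaplacian_mulVec_eq_zero_iff
    (fun i j ↦ by rw [G.dist_comm]) (fun _ _ _ ↦ Nat.cast_nonneg _),
    SimpleGraph.lapMatrix_mulVec_eq_zero_iff_forall_adj]
  simp [pos_iff_ne_zero, hG.dist_eq_zero_iff]

theorem eigMult_distLaplacian_zero (hG : G.Connected) : eigMult (distLaplacian G) 0 = 1 := by
  have : Nonempty V := hG.nonempty
  have hker : Module.End.eigenspace (distLaplacian G).mulVecLin 0 =
      LinearMap.ker ((⊤ : SimpleGraph V).lapMatrix ℝ).mulVecLin := by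
    ext x
    simp [Module.End.eigenspace_zero, distLaplacian_mulVec_eq_zero_iff hG]
  rw [eigMult, hker, SimpleGraph.finrank_ker_lapMatrix,
    ← SimpleGraph.connected_iff_natCard_connectedComponent_eq_one]
  exact SimpleGraph.connected_top

theorem weightedLaplacian_dist_sub_one_mulVec_eq_zero_iff (hG : G.Connected) [DecidableRel G.Adj]
    {x : V → ℝ} : weightedLaplacian (fun i j ↦ (G.dist i j : ℝ) - 1) *ᵥ x = 0 ↔
      Gᶜ.lapMatrix ℝ *ᵥ x = 0 := by
  rw [weightedLaplacian_mulVec_eq_zero_iff (fun i j ↦ by rw [G.dist_comm])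
    (fun _ _ ↦ hG.dist_sub_one_nonneg), SimpleGraph.lapMatrix_mulVec_eq_zero_iff_forall_adj]
  simp [← hG.one_lt_dist_iff_compl_adj]

theorem distLaplacian_mulVec_eq_card_smul_iff (hG : G.Connected) [DecidableRel G.Adj]
    {x : V → ℝ} : distLaplacian G *ᵥ x = (Fintype.card V : ℝ) • x ↔
      Gᶜ.lapMatrix ℝ *ᵥ x = 0 ∧ ∑ i, x i = 0 := by
  have : Nonempty V := hG.nonempty
  refine ⟨fun h ↦ ?_, fun ⟨h, hsum⟩ ↦ ?_⟩
  · have hsum := sum_eq_zero_of_distLaplacian_mulVec_eq_smul (by positivity) h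
    rw [distLaplacian_mulVec_of_sum_eq_zero G hsum, add_eq_left] at h
    exact ⟨(weightedLaplacian_dist_sub_one_mulVec_eq_zero_iff hG).mp h, hsum⟩
  · rw [distLaplacian_mulVec_of_sum_eq_zero G hsum,
      (weightedLaplacian_dist_sub_one_mulVec_eq_zero_iff hG).mpr h, add_zero]

theorem eigMult_distLaplacian_card (hG : G.Connected) :
    eigMult (distLaplacian G) (Fintype.card V) = Nat.card Gᶜ.ConnectedComponent - 1 := by
  classical
  let σ : Module.Dual ℝ (V → ℝ) := ∑ i, LinearMap.proj i
  have hσ (x : V → ℝ) : σ x = ∑ i, x i := by simp [σ]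
  have heig : Module.End.eigenspace (distLaplacian G).mulVecLin (Fintype.card V) =
      LinearMap.ker (Gᶜ.lapMatrix ℝ).mulVecLin ⊓ LinearMap.ker σ := by
    ext x
    simp [hσ, distLaplacian_mulVec_eq_card_smul_iff hG]
  have hσ_one : σ (fun _ ↦ 1) ≠ 0 := by
    have : Nonempty V := hG.nonempty
    simp [hσ]
  have hone : (fun _ ↦ 1) ∈ LinearMap.ker (Gᶜ.lapMatrix ℝ).mulVecLin :=
    Gᶜ.lapMatrix_mulVec_const_eq_zero
  have hdim := Submodule.finrank_inf_ker_add_one hone hσ_one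
  rw [eigMult, heig, ← SimpleGraph.finrank_ker_lapMatrix, ← hdim, Nat.add_sub_cancel]

theorem eq_zero_or_card_le_of_mem_roots_charpoly_distLaplacian (hG : G.Connected) {μ : ℝ}
    (hμ : μ ∈ (distLaplacian G).charpoly.roots) : μ = 0 ∨ (Fintype.card V : ℝ) ≤ μ := by
  rw [← Multiset.count_pos, (distLaplacian_isHermitian G).count_roots_charpoly, eigMult,
    Module.finrank_pos_iff_exists_ne_zero] at hμ
  obtain ⟨⟨x, hx⟩, hx0⟩ := hμ
  exact eq_zero_or_card_le_of_distLaplacian_mulVec_eq_smul hG (by simpa using hx0)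
    (Module.End.mem_eigenspace_iff.mp hx)

end DistLaplacian

/-- For a connected graph `G` on `n ≥ 2` vertices, the second smallest
distance Laplacian eigenvalue `∂ᴸ_{n-1}` satisfies `∂ᴸ_{n-1} ≥ n`, with equality iff the
complement of `G` is disconnected; moreover the multiplicity of `n` as a distance Laplacian
eigenvalue equals the number of connected components of the complement minus one. -/
theorem second_smallest_distLaplacian_eigenvalue
    (n : ℕ) (hn : 2 ≤ n) (G : SimpleGraph (Fin n)) (hG : G.Connected) :
    (n : ℝ) ≤ (distLapEigsAsc G).getD 1 0 ∧
      ((distLapEigsAsc G).getD 1 0 = (n : ℝ) ↔ ¬ Gᶜ.Connected) ∧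
      eigMult (distLaplacian G) (n : ℝ) = Nat.card Gᶜ.ConnectedComponent - 1 := by
  have hA := distLaplacian_isHermitian G
  have hpos : (0 : ℝ) < n := Nat.cast_pos.mpr (by omega)
  have hcard : 2 ≤ Multiset.card (distLaplacian G).charpoly.roots := by
    rwa [hA.card_roots_charpoly, Fintype.card_fin]
  have hzero : (distLaplacian G).charpoly.roots.count 0 = 1 := by
    rw [hA.count_roots_charpoly, eigMult_distLaplacian_zero hG]
  have hgap : ∀ μ ∈ (distLaplacian G).charpoly.roots, μ = 0 ∨ (n : ℝ) ≤ μ := by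
    simpa using fun μ ↦ eq_zero_or_card_le_of_mem_roots_charpoly_distLaplacian hG (μ := μ)
  have hmult : eigMult (distLaplacian G) n = Nat.card Gᶜ.ConnectedComponent - 1 := by
    simpa using eigMult_distLaplacian_card hG
  have hmem : (n : ℝ) ∈ (distLaplacian G).charpoly.roots ↔ ¬ Gᶜ.Connected := by
    have : Nonempty Gᶜ.ConnectedComponent := ⟨Gᶜ.connectedComponentMk ⟨0, by omega⟩⟩
    have := Nat.card_pos (α := Gᶜ.ConnectedComponent)
    rw [← Multiset.count_pos, hA.count_roots_charpoly, hmult,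
      SimpleGraph.connected_iff_natCard_connectedComponent_eq_one]
    omega
  exact ⟨Multiset.le_getD_sort_one hpos hcard hzero hgap,
    (Multiset.getD_sort_one_eq_iff hpos hcard hzero hgap).trans hmem, hmult⟩
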